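/- arXiv:2203.03406 — 2 statements merged into one kernel-verified Lean document; each statement's English description precedes it below -/
import Mathlib

section
/- Let n and k be positive integers, let r be a vertex of the Kneser graph K(2n+k,n), and let D be the set of all vertices v of K(2n+k,n) with dist(r,v) = diam(K(2n+k,n)). Then D ∪ {r} is a geodetic set of K(2n+k,n), i.e., every vertex of K(2n+k,n) lies on a shortest path between two vertices of D ∪ {r}. -/
/-!
In `K(2n+k, n)` the distance between `u` and `v` depends only on `s = |u ∩ v|`: it is
`min (2⌈(n-s)/k⌉) (2⌈s/k⌉+1)` (Valencia-Pabon and Vera). The neighbours `w'` of a vertex `w` with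
`|r ∩ w| = s` realise exactly the values `n-s-k ≤ t ≤ n-s` of `|r ∩ w'|`, and the formula shows
that one of them is farther from `r` than `w` unless `w` is already at distance `diam` from `r`.
So a vertex `v` with `w ∈ I[r,v]` and `d(r,v)` maximal is diametrically opposed to `r`: a farther
neighbour of `v` would extend the geodesic.
-/

/-- The Kneser graph `K(m, n)`: vertices are the `n`-element subsets of an `m`-element
ground set, with edges between disjoint sets. -/
def KneserGraph (m n : ℕ) : SimpleGraph {s : Finset (Fin m) // s.card = n} where
  Adj u v := Disjoint u.1 v.1 ∧ u ≠ v
  symm := ⟨fun u v ⟨h, hne⟩ => ⟨h.symm, hne.symm⟩⟩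
  loopless := ⟨fun u ⟨_, h⟩ => h rfl⟩

/-- The geodetic interval `I[u,v]`: all vertices lying on some shortest `u,v`-path. -/
def geodInterval {V : Type*} (G : SimpleGraph V) (u v : V) : Set V :=
  {w | G.dist u w + G.dist w v = G.dist u v}

/-- `I[W] = ⋃_{u,v ∈ W} I[u,v]`. -/
def geodIntervalSet {V : Type*} (G : SimpleGraph V) (W : Set V) : Set V :=
  ⋃ (u ∈ W) (v ∈ W), geodInterval G u v

/-- `W` is a geodetic set if `I[W] = V(G)`. -/
def IsGeodeticSet {V : Type*} (G : SimpleGraph V) (W : Set V) : Prop :=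
  geodIntervalSet G W = Set.univ

/-- `W` is geodetically convex if `I[W] = W`. -/
def IsGConvex {V : Type*} (G : SimpleGraph V) (W : Set V) : Prop :=
  geodIntervalSet G W = W

/-- The geodetic hull `H[W]`: the smallest g-convex set containing `W`. -/
def geodHull {V : Type*} (G : SimpleGraph V) (W : Set V) : Set V :=
  ⋂₀ {C | IsGConvex G C ∧ W ⊆ C}

/-- `W` is a geodetic hull set if `H[W] = V(G)`. -/
def IsGeodHullSet {V : Type*} (G : SimpleGraph V) (W : Set V) : Prop :=
  geodHull G W = Set.univ

/-- The geodetic number: minimum cardinality of a geodetic set. -/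
noncomputable def geodeticNumber {V : Type*} (G : SimpleGraph V) : ℕ :=
  sInf {m | ∃ W : Set V, IsGeodeticSet G W ∧ W.ncard = m}

/-- The geodetic hull number: minimum cardinality of a geodetic hull set. -/
noncomputable def geodHullNumber {V : Type*} (G : SimpleGraph V) : ℕ :=
  sInf {m | ∃ W : Set V, IsGeodHullSet G W ∧ W.ncard = m}

/-- The function `H(n,k)` from the paper. -/
def Hfun (n k : ℕ) : ℕ := if n % k ≤ 1 then n % k + k - 2 else n % k - 2

/-- `p = (⌈(n-1)/(2k)⌉ - 1)·k + 1`, computed in `ℤ`. -/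
def pInt (n k : ℕ) : ℤ := (⌈((n : ℚ) - 1) / (2 * k)⌉ - 1) * k + 1

open Finset

namespace SimpleGraph

variable {V : Type*} {G : SimpleGraph V}

theorem Connected.exists_dist_eq_diam_mem_geodInterval [Finite V] (hG : G.Connected) {r : V}
    (h : ∀ v, G.dist r v < G.diam → ∃ v', G.Adj v v' ∧ G.dist r v < G.dist r v') (w : V) :
    ∃ v, G.dist r v = G.diam ∧ w ∈ geodInterval G r v := by
  have := hG.nonempty
  obtain ⟨v, hwv, hmax⟩ := Set.exists_max_image {v | w ∈ geodInterval G r v} (G.dist r)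
    (Set.toFinite _) ⟨w, by simp [geodInterval]⟩
  refine ⟨v, (G.dist_le_diam (connected_iff_ediam_ne_top.mp hG)).antisymm
    (not_lt.mp fun hlt => ?_), hwv⟩
  obtain ⟨v', hadj, hlt'⟩ := h v hlt
  have hvv' : G.dist v v' = 1 := dist_eq_one_iff_adj.mpr hadj
  have hrv' := hG.dist_triangle (u := r) (v := v) (w := v')
  have hwv' := hG.dist_triangle (u := w) (v := v) (w := v')
  have hrw := hG.dist_triangle (u := r) (v := w) (w := v')
  have hw : w ∈ geodInterval G r v' := by
    simp only [Set.mem_ofPred_eq, geodInterval] at hwv ⊢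
    omega
  exact (hmax v' hw).not_gt hlt'

theorem Connected.isGeodeticSet_diametral_union_singleton [Finite V] (hG : G.Connected) {r : V}
    (h : ∀ v, G.dist r v < G.diam → ∃ v', G.Adj v v' ∧ G.dist r v < G.dist r v') :
    IsGeodeticSet G ({v | G.dist r v = G.diam} ∪ {r}) := by
  refine Set.eq_univ_of_forall fun w => ?_
  obtain ⟨v, hv, hwv⟩ := hG.exists_dist_eq_diam_mem_geodInterval h w
  simp only [geodIntervalSet, Set.mem_iUnion]
  exact ⟨r, Or.inr rfl, v, Or.inl hv, hwv⟩

end SimpleGraph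

def kneserDist (n k s : ℕ) : ℕ := min (2 * ((n - s) ⌈/⌉ k)) (2 * (s ⌈/⌉ k) + 1)

section kneserDist

variable {n k : ℕ}

theorem kneserDist_le_two_mul_iff (hk : 0 < k) {s j : ℕ} :
    kneserDist n k s ≤ 2 * j ↔ n - s ≤ k * j ∨ s + k ≤ k * j := by
  rw [kneserDist, min_le_iff, ← ceilDiv_le_iff_le_mul hk]
  refine or_congr (by omega) ?_
  rcases j with _ | i
  · simp only [mul_zero, nonpos_iff_eq_zero, add_eq_zero, hk.ne', and_false, iff_false]
    omega
  · have : s + k ≤ k * (i + 1) ↔ s ⌈/⌉ k ≤ i := by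
      rw [ceilDiv_le_iff_le_mul hk, mul_add_one]
      omega
    rw [this]
    omega

theorem kneserDist_le_two_mul_add_one_iff (hk : 0 < k) {s j : ℕ} :
    kneserDist n k s ≤ 2 * j + 1 ↔ n - s ≤ k * j ∨ s ≤ k * j := by
  rw [kneserDist, min_le_iff, ← ceilDiv_le_iff_le_mul hk, ← ceilDiv_le_iff_le_mul hk]
  omega

theorem exists_lt_kneserDist (hk : 0 < k) {s t₀ : ℕ} (hs : s ≤ n)
    (h : kneserDist n k s < kneserDist n k t₀) :
    ∃ t, s + t ≤ n ∧ n ≤ s + t + k ∧ kneserDist n k s < kneserDist n k t := by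
  simp only [← not_le] at h ⊢
  obtain ⟨j, hj | hj⟩ := Nat.even_or_odd' (kneserDist n k s) <;> rw [hj] at h ⊢
  · have hle := (kneserDist_le_two_mul_iff hk).mp hj.le
    have hgt : k * j < n - s + k ∧ k * j < s + k := by
      rcases j with _ | i
      · omega
      · have := mt (kneserDist_le_two_mul_add_one_iff (n := n) (s := s) (j := i) hk).mpr
          (by omega)
        rw [mul_add_one]
        omega
    rw [kneserDist_le_two_mul_iff hk] at h
    refine ⟨min (n - s) (n - k * j - 1), ?_⟩
    rw [kneserDist_le_two_mul_iff hk]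
    omega
  · have hle := (kneserDist_le_two_mul_add_one_iff hk).mp hj.le
    have hgt := mt (kneserDist_le_two_mul_iff (n := n) (s := s) (j := j) hk).mpr (by omega)
    rw [kneserDist_le_two_mul_add_one_iff hk] at h
    refine ⟨n - k * j - 1, ?_⟩
    rw [kneserDist_le_two_mul_add_one_iff hk]
    omega

end kneserDist

namespace KneserGraph

variable {m n k : ℕ}

theorem adj_iff_disjoint (hn : 0 < n) {u v : {s : Finset (Fin m) // s.card = n}} :
    (KneserGraph m n).Adj u v ↔ Disjoint u.1 v.1 := by
  refine ⟨And.left, fun h => ⟨h, fun huv => ?_⟩⟩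
  subst huv
  have := u.2
  rw [disjoint_self.mp h, bot_eq_empty, card_empty] at this
  omega

theorem card_inter_le (u v : {s : Finset (Fin m) // s.card = n}) : #(u.1 ∩ v.1) ≤ n :=
  (card_le_card inter_subset_left).trans_eq u.2

theorem eq_of_le_card_inter {u v : {s : Finset (Fin m) // s.card = n}} (h : n ≤ #(u.1 ∩ v.1)) :
    u = v := by
  have hu := eq_of_subset_of_card_le inter_subset_left (u.2.trans_le h)
  have hv := eq_of_subset_of_card_le inter_subset_right (v.2.trans_le h)
  exact Subtype.ext (hu.symm.trans hv)

theorem card_inter_add_card_inter_le {u u' : {s : Finset (Fin m) // s.card = n}}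
    (h : (KneserGraph m n).Adj u u') (r : {s : Finset (Fin m) // s.card = n}) :
    #(r.1 ∩ u.1) + #(r.1 ∩ u'.1) ≤ n := by
  rw [← card_union_of_disjoint (h.1.mono inter_subset_right inter_subset_right)]
  exact (card_le_card (union_subset inter_subset_left inter_subset_left)).trans_eq r.2

theorem le_card_inter_add_card_inter_add {u u' : {s : Finset (Fin (2 * n + k)) // s.card = n}}
    (h : (KneserGraph (2 * n + k) n).Adj u u') (r : {s : Finset (Fin (2 * n + k)) // s.card = n}) :
    n ≤ #(r.1 ∩ u.1) + #(r.1 ∩ u'.1) + k := by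
  have huu' : #(u.1 ∪ u'.1) = 2 * n := by rw [card_union_of_disjoint h.1, u.2, u'.2]; ring
  have hunion := card_union_add_card_inter r.1 (u.1 ∪ u'.1)
  rw [inter_union_distrib_left,
    card_union_of_disjoint (h.1.mono inter_subset_right inter_subset_right)] at hunion
  have := card_le_univ (r.1 ∪ (u.1 ∪ u'.1))
  simp only [Fintype.card_fin] at this
  omega

theorem exists_adj_card_inter_eq (hn : 0 < n) (r u : {s : Finset (Fin (2 * n + k)) // s.card = n})
    {t : ℕ} (h₁ : #(r.1 ∩ u.1) + t ≤ n) (h₂ : n ≤ #(r.1 ∩ u.1) + t + k) :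
    ∃ u', (KneserGraph (2 * n + k) n).Adj u u' ∧ #(r.1 ∩ u'.1) = t := by
  have hsdiff : #(r.1 \ u.1) = n - #(r.1 ∩ u.1) := by
    have := card_inter_add_card_sdiff r.1 u.1
    have := r.2
    omega
  have hcompl : #(r.1 ∪ u.1)ᶜ = k + #(r.1 ∩ u.1) := by
    have := card_union_add_card_inter r.1 u.1
    have := r.2
    have := u.2
    rw [card_compl, Fintype.card_fin]
    omega
  obtain ⟨X, hX, hXcard⟩ := exists_subset_card_eq (hsdiff ▸ (by omega : t ≤ n - #(r.1 ∩ u.1)))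
  obtain ⟨Y, hY, hYcard⟩ := exists_subset_card_eq (hcompl ▸ (by omega : n - t ≤ k + #(r.1 ∩ u.1)))
  rw [subset_compl_iff_disjoint_right, disjoint_union_right] at hY
  have hXr : X ⊆ r.1 := hX.trans sdiff_subset
  have hXY : Disjoint X Y := (hY.1.mono_right hXr).symm
  refine ⟨⟨X ∪ Y, by rw [card_union_of_disjoint hXY]; omega⟩, (adj_iff_disjoint hn).mpr ?_, ?_⟩
  · exact disjoint_union_right.mpr ⟨disjoint_sdiff.mono_right hX, hY.2.symm⟩
  · show #(r.1 ∩ (X ∪ Y)) = t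
    rw [inter_union_distrib_left, inter_eq_right.mpr hXr,
      disjoint_iff_inter_eq_empty.mp hY.1.symm, union_empty, hXcard]

theorem edist_le_two_mul (hn : 0 < n) (u : {s : Finset (Fin (2 * n + k)) // s.card = n}) (j : ℕ)
    (v : {s : Finset (Fin (2 * n + k)) // s.card = n}) (h : n - #(u.1 ∩ v.1) ≤ k * j) :
    (KneserGraph (2 * n + k) n).edist u v ≤ (2 * j : ℕ) := by
  have := card_inter_le u v
  induction j generalizing v with
  | zero => simp [eq_of_le_card_inter (by omega : n ≤ #(u.1 ∩ v.1))]
  | succ j ih =>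
    -- two steps raise the number of common elements with `u` by `k`, up to `n`
    set s := min (#(u.1 ∩ v.1) + k) n
    obtain ⟨x, hvx, hx⟩ := exists_adj_card_inter_eq hn u v (t := n - s) (by omega) (by omega)
    obtain ⟨y, hxy, hy⟩ := exists_adj_card_inter_eq hn u x (t := s) (by omega) (by omega)
    have hyu := ih y (by rw [mul_add_one] at h; omega) (card_inter_le u y)
    calc (KneserGraph (2 * n + k) n).edist u v
        ≤ (KneserGraph (2 * n + k) n).edist u y + ((KneserGraph (2 * n + k) n).edist y x +
            (KneserGraph (2 * n + k) n).edist x v) :=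
          SimpleGraph.edist_triangle.trans (by gcongr; exact SimpleGraph.edist_triangle)
      _ = (KneserGraph (2 * n + k) n).edist u y + (1 + 1) := by
          rw [SimpleGraph.edist_eq_one_iff_adj.mpr hxy.symm,
            SimpleGraph.edist_eq_one_iff_adj.mpr hvx.symm]
      _ ≤ (2 * (j + 1) : ℕ) := by
          grw [hyu]
          norm_cast

theorem edist_le_two_mul_add_one (hn : 0 < n)
    (u v : {s : Finset (Fin (2 * n + k)) // s.card = n}) {j : ℕ} (h : #(u.1 ∩ v.1) ≤ k * j) :
    (KneserGraph (2 * n + k) n).edist u v ≤ (2 * j + 1 : ℕ) := by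
  obtain ⟨x, hvx, hx⟩ := exists_adj_card_inter_eq hn u v (t := n - #(u.1 ∩ v.1))
    (by have := card_inter_le u v; omega) (by omega)
  calc (KneserGraph (2 * n + k) n).edist u v
      ≤ (KneserGraph (2 * n + k) n).edist u x + (KneserGraph (2 * n + k) n).edist x v :=
        SimpleGraph.edist_triangle
    _ ≤ (2 * j : ℕ) + 1 := by
        grw [edist_le_two_mul hn u j x (by omega),
          SimpleGraph.edist_eq_one_iff_adj.mpr hvx.symm]
    _ = (2 * j + 1 : ℕ) := by norm_cast

theorem card_inter_bounds_of_walk {u v : {s : Finset (Fin (2 * n + k)) // s.card = n}}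
    (p : (KneserGraph (2 * n + k) n).Walk u v) :
    (∀ j, p.length = 2 * j → n - #(u.1 ∩ v.1) ≤ k * j) ∧
      (∀ j, p.length = 2 * j + 1 → #(u.1 ∩ v.1) ≤ k * j) := by
  induction p with
  | @nil w => exact ⟨fun j hj => by simp [show j = 0 by simpa using hj, w.2], by simp⟩
  | @cons u a v hua q ih =>
    have h₁ := card_inter_add_card_inter_le hua v
    have h₂ := le_card_inter_add_card_inter_add hua v
    rw [inter_comm v.1 u.1, inter_comm v.1 a.1] at h₁ h₂
    rw [SimpleGraph.Walk.length_cons]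
    refine ⟨fun j hj => ?_, fun j hj => ?_⟩
    · obtain ⟨i, rfl⟩ : ∃ i, j = i + 1 := ⟨j - 1, by omega⟩
      have := ih.2 i (by omega)
      rw [mul_add_one]
      omega
    · have := ih.1 j (by omega)
      omega

theorem edist_eq (hn : 0 < n) (hk : 0 < k) (u v : {s : Finset (Fin (2 * n + k)) // s.card = n}) :
    (KneserGraph (2 * n + k) n).edist u v = kneserDist n k #(u.1 ∩ v.1) := by
  have hupper : (KneserGraph (2 * n + k) n).edist u v ≤ kneserDist n k #(u.1 ∩ v.1) := by
    rcases min_choice (2 * ((n - #(u.1 ∩ v.1)) ⌈/⌉ k)) (2 * (#(u.1 ∩ v.1) ⌈/⌉ k) + 1)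
      with h | h <;> rw [kneserDist, h]
    · exact edist_le_two_mul hn u _ v ((ceilDiv_le_iff_le_mul hk).mp le_rfl)
    · exact edist_le_two_mul_add_one hn u v ((ceilDiv_le_iff_le_mul hk).mp le_rfl)
  refine hupper.antisymm ?_
  obtain ⟨p, hp⟩ := (SimpleGraph.reachable_of_edist_ne_top
    (ne_top_of_le_ne_top (ENat.natCast_ne_top _) hupper)).exists_walk_length_eq_edist
  rw [← hp, Nat.cast_le]
  obtain ⟨j, hj | hj⟩ := Nat.even_or_odd' p.length <;> rw [hj]
  · exact (kneserDist_le_two_mul_iff hk).mpr (.inl ((card_inter_bounds_of_walk p).1 j hj))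
  · exact (kneserDist_le_two_mul_add_one_iff hk).mpr (.inr ((card_inter_bounds_of_walk p).2 j hj))

theorem dist_eq (hn : 0 < n) (hk : 0 < k) (u v : {s : Finset (Fin (2 * n + k)) // s.card = n}) :
    (KneserGraph (2 * n + k) n).dist u v = kneserDist n k #(u.1 ∩ v.1) := by
  rw [SimpleGraph.dist, edist_eq hn hk, ENat.toNat_natCast]

theorem connected (hn : 0 < n) (hk : 0 < k) : (KneserGraph (2 * n + k) n).Connected := by
  obtain ⟨s, -, hs⟩ := exists_subset_card_eq (s := (univ : Finset (Fin (2 * n + k)))) (n := n)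
    (by simp; omega)
  have : Nonempty {s : Finset (Fin (2 * n + k)) // s.card = n} := ⟨⟨s, hs⟩⟩
  exact ⟨fun u v => SimpleGraph.reachable_of_edist_ne_top <| by
    rw [edist_eq hn hk]
    exact ENat.natCast_ne_top _⟩

theorem exists_adj_dist_lt (hn : 0 < n) (hk : 0 < k)
    (r v : {s : Finset (Fin (2 * n + k)) // s.card = n})
    (h : (KneserGraph (2 * n + k) n).dist r v < (KneserGraph (2 * n + k) n).diam) :
    ∃ v', (KneserGraph (2 * n + k) n).Adj v v' ∧
      (KneserGraph (2 * n + k) n).dist r v < (KneserGraph (2 * n + k) n).dist r v' := by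
  have := (connected hn hk).nonempty
  obtain ⟨a, b, hab⟩ := (KneserGraph (2 * n + k) n).exists_dist_eq_diam
  rw [← hab, dist_eq hn hk, dist_eq hn hk] at h
  obtain ⟨t, ht₁, ht₂, ht⟩ := exists_lt_kneserDist hk (card_inter_le r v) h
  obtain ⟨v', hvv', hv'⟩ := exists_adj_card_inter_eq hn r v ht₁ ht₂
  exact ⟨v', hvv', by rwa [dist_eq hn hk, dist_eq hn hk, hv']⟩

end KneserGraph

theorem diametrically_opposed_union_root_isGeodeticSet
    (n k : ℕ) (hn : 0 < n) (hk : 0 < k)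
    (r : {s : Finset (Fin (2 * n + k)) // s.card = n}) :
    IsGeodeticSet (KneserGraph (2 * n + k) n)
      ({v | (KneserGraph (2 * n + k) n).dist r v = (KneserGraph (2 * n + k) n).diam} ∪ {r}) :=
  (KneserGraph.connected hn hk).isGeodeticSet_diametral_union_singleton
    (KneserGraph.exists_adj_dist_lt hn hk r)
end

section
/- Let n ≥ 2 and k be positive integers with k ≥ n-1 and k > 2, and let x and y be vertices of the Kneser graph K(2n+k,n) with |x ∩ y| = n-1. Then {x, y} is a geodetic hull set of K(2n+k,n). -/
/-!
In a g-convex set `C` of the Kneser graph, two distinct vertices `u`, `v` that meet are at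
distance 2, so every common neighbour, i.e. every `n`-set avoiding `u ∪ v`, lies in `C`.
Starting from `x` and `y`, this puts every `n`-subset of `T = (x ∪ y)ᶜ` (of size `n + k - 1`)
into `C`. If `n + 1` points of `T` avoid a vertex `w`, two `n`-subsets of them overlapping in
`n - 1` points force `w` into `C`. Otherwise `w` misses at least `k - 1` points of `T` and `k`
points of `x ∪ y`; choose `n + 1` of these, `k - 1` of them in `T`. Dropping either of two chosen
points of `T` gives a vertex missing `n + 1` points of `T`, hence in `C` by the first case, and
these two vertices force `w` into `C`. Choosing the points needs `n + 2 ≤ 2k`.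
-/

open Finset

section

variable {V : Type*} {G : SimpleGraph V}

lemma isGeodHullSet_iff {W : Set V} :
    IsGeodHullSet G W ↔ ∀ C, IsGConvex G C → W ⊆ C → C = Set.univ := by
  simp [IsGeodHullSet, geodHull, Set.sInter_eq_univ]

lemma IsGConvex.mem_of_adj_of_adj {C : Set V} (hC : IsGConvex G C) {u v t : V}
    (hu : u ∈ C) (hv : v ∈ C) (huv : u ≠ v) (hnadj : ¬ G.Adj u v)
    (hut : G.Adj u t) (htv : G.Adj t v) : t ∈ C := by
  have hdist : G.dist u v = 2 := by
    have h := (hut.reachable.trans htv.reachable).coe_dist_eq_edist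
    rw [SimpleGraph.edist_eq_two_iff.mpr ⟨huv, hnadj, t, hut, htv.symm⟩] at h
    exact_mod_cast h
  rw [← hC]
  refine Set.mem_biUnion hu (Set.mem_biUnion hv ?_)
  show G.dist u t + G.dist t v = G.dist u v
  rw [SimpleGraph.dist_eq_one_iff_adj.mpr hut, SimpleGraph.dist_eq_one_iff_adj.mpr htv,
    hdist]

end

namespace KneserGraph

variable {m n : ℕ}

abbrev Vertex (m n : ℕ) := {s : Finset (Fin m) // s.card = n}

lemma adj_iff (hn : n ≠ 0) {u v : Vertex m n} :
    (KneserGraph m n).Adj u v ↔ Disjoint u.1 v.1 := by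
  refine ⟨And.left, fun h => ⟨h, ?_⟩⟩
  rintro rfl
  simp_all [u.2.symm]

lemma mem_of_isGConvex_of_disjoint_union {C : Set (Vertex m n)}
    (hC : IsGConvex (KneserGraph m n) C) {u v w : Vertex m n} (hu : u ∈ C) (hv : v ∈ C)
    (huv : u ≠ v) (hint : (u.1 ∩ v.1).Nonempty) (hw : Disjoint (u.1 ∪ v.1) w.1) : w ∈ C := by
  have hn : n ≠ 0 := by
    rintro rfl
    simp_all [card_eq_zero.1 u.2]
  rw [disjoint_union_left] at hw
  refine hC.mem_of_adj_of_adj hu hv huv ?_ ((adj_iff hn).2 hw.1) ((adj_iff hn).2 hw.2.symm)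
  rwa [adj_iff hn, not_disjoint_iff_nonempty_inter]

lemma mem_of_isGConvex_of_erase (hn : 2 ≤ n) {C : Set (Vertex m n)}
    (hC : IsGConvex (KneserGraph m n) C) {S : Finset (Fin m)} (hS : #S = n + 1) {a b : Fin m}
    (ha : a ∈ S) (hb : b ∈ S) (hab : a ≠ b) {u v w : Vertex m n}
    (hu : u.1 = S.erase a) (hv : v.1 = S.erase b) (huC : u ∈ C) (hvC : v ∈ C)
    (hw : Disjoint S w.1) : w ∈ C := by
  have hbu : b ∈ S.erase a := mem_erase.2 ⟨hab.symm, hb⟩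
  refine mem_of_isGConvex_of_disjoint_union hC huC hvC ?_ ?_ ?_
  · rintro rfl
    rw [← hu, hv] at hbu
    exact notMem_erase b S hbu
  · obtain ⟨c, hc⟩ : ((S.erase a).erase b).Nonempty := by
      rw [← card_pos, card_erase_of_mem hbu, card_erase_of_mem ha, hS]
      omega
    exact ⟨c, by simp_all⟩
  · rw [hu, hv]
    exact hw.mono_left (union_subset (erase_subset _ _) (erase_subset _ _))

lemma mem_of_isGConvex_of_card_sdiff (hn : 2 ≤ n) {C : Set (Vertex m n)}
    (hC : IsGConvex (KneserGraph m n) C) {T : Finset (Fin m)}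
    (hTC : ∀ u : Vertex m n, u.1 ⊆ T → u ∈ C) {w : Vertex m n} (hw : n + 1 ≤ #(T \ w.1)) :
    w ∈ C := by
  obtain ⟨S, hST, hS⟩ := exists_subset_card_eq hw
  obtain ⟨a, ha, b, hb, hab⟩ := one_lt_card.1 (by omega : 1 < #S)
  have hmem : ∀ c (hc : c ∈ S), (⟨S.erase c, by simp [hc, hS]⟩ : Vertex m n) ∈ C :=
    fun c _ => hTC _ ((erase_subset c S).trans (hST.trans sdiff_subset))
  exact mem_of_isGConvex_of_erase hn hC hS ha hb hab rfl rfl (hmem a ha) (hmem b hb)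
    (sdiff_disjoint.mono_left hST)

lemma eq_univ_of_isGConvex_of_forall_subset_mem {n k : ℕ} (hn : 2 ≤ n) (hk : 3 ≤ k)
    (hnk : n + 2 ≤ 2 * k) {C : Set (Vertex (2 * n + k) n)}
    (hC : IsGConvex (KneserGraph (2 * n + k) n) C) {T : Finset (Fin (2 * n + k))}
    (hT : #Tᶜ = n + 1) (hTC : ∀ u : Vertex (2 * n + k) n, u.1 ⊆ T → u ∈ C) :
    C = Set.univ := by
  refine Set.eq_univ_of_forall fun w => ?_
  by_cases hw : n + 1 ≤ #(T \ w.1)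
  · exact mem_of_isGConvex_of_card_sdiff hn hC hTC hw
  have hTcard : #T = n + k - 1 := by
    rw [card_compl, Fintype.card_fin] at hT
    omega
  have hsplit : #(T \ w.1) + #(Tᶜ \ w.1) = n + k := by
    rw [← card_union_of_disjoint (disjoint_compl_right.mono sdiff_subset sdiff_subset),
      ← union_sdiff_distrib, union_compl, ← compl_eq_univ_sdiff, card_compl, Fintype.card_fin,
      w.2]
    omega
  have hTw : #(Tᶜ \ w.1) ≤ n + 1 := hT ▸ card_le_card sdiff_subset
  obtain ⟨A, hAT, hA⟩ := exists_subset_card_eq (show k - 1 ≤ #(T \ w.1) by omega)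
  obtain ⟨B, hBT, hB⟩ := exists_subset_card_eq (show n + 2 - k ≤ #(Tᶜ \ w.1) by omega)
  obtain ⟨a, ha, b, hb, hab⟩ := one_lt_card.1 (by omega : 1 < #A)
  have hAB : Disjoint A B :=
    (disjoint_compl_right.mono sdiff_subset sdiff_subset).mono hAT hBT
  have hS : #(A ∪ B) = n + 1 := by
    rw [card_union_of_disjoint hAB]
    omega
  have hSw : Disjoint (A ∪ B) w.1 :=
    disjoint_union_left.2 ⟨sdiff_disjoint.mono_left hAT, sdiff_disjoint.mono_left hBT⟩
  have hmem : ∀ c (hc : c ∈ A),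
      (⟨(A ∪ B).erase c, by simp [mem_union_left B hc, hS]⟩ : Vertex _ n) ∈ C := by
    intro c hc
    refine mem_of_isGConvex_of_card_sdiff hn hC hTC ?_
    calc n + 1 ≤ #T - #(A.erase c) := by rw [card_erase_of_mem hc]; omega
      _ ≤ #(T \ A.erase c) := le_card_sdiff _ _
      _ ≤ #(T \ (A ∪ B).erase c) := card_le_card fun x hx => by
        simp only [mem_sdiff, mem_erase, mem_union] at hx ⊢
        refine ⟨hx.1, fun ⟨hxc, hxAB⟩ => hxAB.elim (fun hxA => hx.2 ⟨hxc, hxA⟩) fun hxB => ?_⟩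
        exact mem_compl.1 (mem_sdiff.1 (hBT hxB)).1 hx.1
  exact mem_of_isGConvex_of_erase hn hC hS (mem_union_left B ha) (mem_union_left B hb) hab rfl rfl
    (hmem a ha) (hmem b hb) hSw

end KneserGraph

theorem pair_isGeodHullSet_of_k_gt_two_general
    (n k : ℕ) (hn : 2 ≤ n) (hkn : n - 1 ≤ k) (hk2 : 2 < k)
    (x y : {s : Finset (Fin (2 * n + k)) // s.card = n}) (hxy : (x.1 ∩ y.1).card = n - 1) :
    IsGeodHullSet (KneserGraph (2 * n + k) n) {x, y} := by
  rw [isGeodHullSet_iff]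
  intro C hC hxyC
  have hx : x ∈ C := hxyC (Set.mem_insert x _)
  have hy : y ∈ C := hxyC (Set.mem_insert_of_mem x rfl)
  have hne : x ≠ y := by
    rintro rfl
    rw [inter_self, x.2] at hxy
    omega
  have hint : (x.1 ∩ y.1).Nonempty := card_pos.1 (by omega)
  refine KneserGraph.eq_univ_of_isGConvex_of_forall_subset_mem hn (by omega) (by omega) hC
    (T := (x.1 ∪ y.1)ᶜ) ?_ fun u hu => ?_
  · have := card_union_add_card_inter x.1 y.1
    rw [compl_compl]
    omega
  · exact KneserGraph.mem_of_isGConvex_of_disjoint_union hC hx hy hne hint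
      (subset_compl_iff_disjoint_left.1 hu)

theorem pair_isGeodHullSet_of_k_gt_two
    (n k : ℕ) (hn : 2 ≤ n) (hk : 0 < k) (hkn : n - 1 ≤ k) (hk2 : 2 < k)
    (x y : {s : Finset (Fin (2 * n + k)) // s.card = n}) (hxy : (x.1 ∩ y.1).card = n - 1) :
    IsGeodHullSet (KneserGraph (2 * n + k) n) {x, y} :=
  pair_isGeodHullSet_of_k_gt_two_general n k hn hkn hk2 x y hxy
end
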